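/- If 1 ≤ x < 2, then for every n ≥ 0 the logarithm recurrence satisfies 0 ≤ ln(x) − Lₙ < 2^{1−n}; in particular Lₙ converges to ln(x) as n → ∞. -/
import Mathlib


/-- Restoring shift-and-add recurrence for computing `ln x`:
`(logRec x n).1 = Eₙ` and `(logRec x n).2 = Lₙ`, with `E₀ = 1`, `L₀ = 0`,
`dₙ = 1` iff `Eₙ (1 + 2⁻ⁿ) ≤ x`, `Eₙ₊₁ = Eₙ (1 + dₙ 2⁻ⁿ)`,
`Lₙ₊₁ = Lₙ + dₙ ln (1 + 2⁻ⁿ)`. -/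
noncomputable def logRec (x : ℝ) : ℕ → ℝ × ℝ
  | 0 => (1, 0)
  | n + 1 =>
    let p := logRec x n
    if p.1 * (1 + (2 : ℝ) ^ (-(n : ℤ))) ≤ x then
      (p.1 * (1 + (2 : ℝ) ^ (-(n : ℤ))), p.2 + Real.log (1 + (2 : ℝ) ^ (-(n : ℤ))))
    else p

lemma logRec_key (x : ℝ) (hx1 : 1 ≤ x) (hx2 : x < 2) : ∀ n : ℕ,
    0 < (logRec x n).1 ∧ (logRec x n).1 ≤ x ∧
    x < (logRec x n).1 * (1 + (2 : ℝ) ^ ((1 : ℤ) - n)) ∧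
    (logRec x n).2 = Real.log (logRec x n).1 := by
  intro n
  induction n with
  | zero =>
    simp [logRec]
    constructor
    · linarith
    · norm_num; linarith
  | succ n ih =>
    obtain ⟨hpos, hle, hlt, hlog⟩ := ih
    have h2 : (0:ℝ) < (2 : ℝ) ^ (-(n : ℤ)) := by positivity
    have hsplit : (2 : ℝ) ^ ((1 : ℤ) - n) = 2 * (2 : ℝ) ^ (-(n : ℤ)) := by
      rw [show (1:ℤ) - n = -(n:ℤ) + 1 by ring, zpow_add₀ (by norm_num : (2:ℝ) ≠ 0), zpow_one]
      ring
    have hsucc : ((1 : ℤ) - (n+1 : ℕ)) = -(n : ℤ) := by push_cast; ring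
    simp only [logRec]
    split_ifs with h
    · refine ⟨by positivity, h, ?_, ?_⟩
      · rw [hsucc]
        have : (logRec x n).1 * (1 + 2 * (2 : ℝ) ^ (-(n : ℤ))) ≤
            (logRec x n).1 * (1 + (2 : ℝ) ^ (-(n : ℤ))) * (1 + (2 : ℝ) ^ (-(n : ℤ))) := by
          nlinarith [sq_nonneg ((2:ℝ) ^ (-(n:ℤ)))]
        calc x < (logRec x n).1 * (1 + (2 : ℝ) ^ ((1 : ℤ) - n)) := hlt
          _ = (logRec x n).1 * (1 + 2 * (2 : ℝ) ^ (-(n : ℤ))) := by rw [hsplit]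
          _ ≤ _ := this
      · rw [hlog, ← Real.log_mul (ne_of_gt hpos) (by positivity)]
    · refine ⟨hpos, hle, ?_, hlog⟩
      rw [hsucc]
      linarith [not_le.mp h]

/-- If `1 ≤ x < 2`, then for every `n`, `0 ≤ ln x − Lₙ < 2^{1−n}`;
in particular `Lₙ → ln x`. -/
theorem logRec_error_bound (x : ℝ) (hx1 : 1 ≤ x) (hx2 : x < 2) :
    (∀ n : ℕ,
      0 ≤ Real.log x - (logRec x n).2 ∧
      Real.log x - (logRec x n).2 < (2 : ℝ) ^ ((1 : ℤ) - n)) ∧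
    Filter.Tendsto (fun n => (logRec x n).2) Filter.atTop (nhds (Real.log x)) := by

  have key := logRec_key x hx1 hx2
  have main : ∀ n : ℕ, 0 ≤ Real.log x - (logRec x n).2 ∧
      Real.log x - (logRec x n).2 < (2 : ℝ) ^ ((1 : ℤ) - n) := by
    intro n
    obtain ⟨hpos, hle, hlt, hlog⟩ := key n
    have hx0 : (0:ℝ) < x := lt_of_lt_of_le one_pos hx1
    have h2 : (0:ℝ) < (2 : ℝ) ^ ((1:ℤ) - n) := by positivity
    constructor
    · rw [hlog]
      have := Real.log_le_log hpos hle
      linarith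
    · rw [hlog]
      have h1 : Real.log x - Real.log (logRec x n).1 = Real.log (x / (logRec x n).1) := by
        rw [Real.log_div (ne_of_gt hx0) (ne_of_gt hpos)]
      rw [h1]
      have hdiv : x / (logRec x n).1 < 1 + (2 : ℝ) ^ ((1:ℤ) - n) := by
        rw [div_lt_iff₀ hpos]
        linarith [hlt]
      calc Real.log (x / (logRec x n).1) < Real.log (1 + (2 : ℝ) ^ ((1:ℤ) - n)) := by
            apply Real.log_lt_log (by positivity) hdiv
        _ ≤ (2 : ℝ) ^ ((1:ℤ) - n) := by
            have := Real.log_le_sub_one_of_pos (show (0:ℝ) < 1 + (2 : ℝ) ^ ((1:ℤ) - n) by positivity)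
            linarith
  refine ⟨main, ?_⟩
  have hsq : Filter.Tendsto (fun n : ℕ => (2 : ℝ) ^ ((1:ℤ) - n)) Filter.atTop (nhds 0) := by
    have : Filter.Tendsto (fun n : ℕ => ((1:ℝ)/2) ^ n * 2) Filter.atTop (nhds (0 * 2)) := by
      exact (tendsto_pow_atTop_nhds_zero_of_lt_one (by norm_num) (by norm_num)).mul_const 2
    rw [zero_mul] at this
    convert this using 2 with n
    rw [zpow_sub₀ (by norm_num : (2:ℝ) ≠ 0), zpow_one, zpow_natCast]
    rw [div_pow, one_pow]
    field_simp
  have : Filter.Tendsto (fun n : ℕ => Real.log x - (logRec x n).2) Filter.atTop (nhds 0) := by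
    apply squeeze_zero (fun n => (main n).1) (fun n => le_of_lt (main n).2) hsq
  have := (this.const_sub (Real.log x))
  simpa using this
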